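/- arXiv:1711.02504 — 3 statements merged into one kernel-verified Lean document; each statement's English description precedes it below -/
import Mathlib

section
/- Let p ≥ 1 be an integer, let θ and θ₀ be unit vectors in ℝ^p, and set M := θθ' − θ₀θ₀'. Then for all real numbers a, b, c, d one has tr[ M² (a θθ' + b (I_p − θθ')) M² (c θθ' + d (I_p − θθ')) ] = (ac + bd)(1 − (θ₀'θ)²)², where M² = M·M, I_p is the p×p identity matrix, and tr is the trace. -/
open Matrix

lemma vmv_mul {p : ℕ} (u v w x : Fin p → ℝ) :
    vecMulVec u v * vecMulVec w x = (v ⬝ᵥ w) • vecMulVec u x := by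
  ext i j
  simp [Matrix.mul_apply, vecMulVec_apply, dotProduct, Finset.mul_sum, Finset.sum_mul]
  congr 1; ext k; ring

lemma trace_vmv {p : ℕ} (u v : Fin p → ℝ) :
    Matrix.trace (vecMulVec u v) = v ⬝ᵥ u := by
  simp [Matrix.trace, Matrix.diag, vecMulVec_apply, dotProduct, mul_comm]

theorem trace_Msq_A_Msq_B (p : ℕ) (hp : 1 ≤ p) (θ θ₀ : Fin p → ℝ)
    (hθ : θ ⬝ᵥ θ = 1) (hθ₀ : θ₀ ⬝ᵥ θ₀ = 1) (a b c d : ℝ) :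
    Matrix.trace
      ((vecMulVec θ θ - vecMulVec θ₀ θ₀) ^ 2 *
        (a • vecMulVec θ θ + b • ((1 : Matrix (Fin p) (Fin p) ℝ) - vecMulVec θ θ)) *
        (vecMulVec θ θ - vecMulVec θ₀ θ₀) ^ 2 *
        (c • vecMulVec θ θ + d • ((1 : Matrix (Fin p) (Fin p) ℝ) - vecMulVec θ θ))) =
      (a * c + b * d) * (1 - (θ₀ ⬝ᵥ θ) ^ 2) ^ 2 := by
  have hcomm : θ ⬝ᵥ θ₀ = θ₀ ⬝ᵥ θ := dotProduct_comm θ θ₀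
  simp only [sq, mul_add, add_mul, mul_sub, sub_mul, smul_mul_assoc, mul_smul_comm,
    vmv_mul, one_mul, mul_one, smul_smul, smul_sub, smul_add, sub_smul, trace_add,
    trace_sub, trace_smul, trace_vmv, hθ, hθ₀, hcomm, smul_eq_mul, trace_one,
    Fintype.card_fin, one_smul]
  ring
end

section
/- For every integer p ≥ 2 and every real κ > 0, (κ/p)/( 1/2 + √(1/4 + (κ/p)²) ) ≤ e₁(p,κ) ≤ (κ/p)/( 1/2 − 1/p + √((1/2 + 1/p)² + (κ/p)²) ). -/
open MeasureTheory intervalIntegral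

/-- `mInt p κ ℓ = ∫_{-1}^1 u^ℓ (1-u²)^{(p-3)/2} exp(κ u) du`. -/
noncomputable def mInt (p : ℕ) (κ : ℝ) (ℓ : ℕ) : ℝ :=
  ∫ u in (-1 : ℝ)..1, u ^ ℓ * (1 - u ^ 2) ^ (((p : ℝ) - 3) / 2) * Real.exp (κ * u)

/-- `e₁(p,κ) = E[U]` under `FvML_p(θ,κ)`. -/
noncomputable def e1 (p : ℕ) (κ : ℝ) : ℝ := mInt p κ 1 / mInt p κ 0

/-!
Let `r_c(κ)` be the mean of `u` for the density proportional to `(1 - u²)^c e^{κu}` on `[-1, 1]`,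
so that `e₁(p, κ) = r_{(p-3)/2}(κ)`. Integrating `d/du [u^ℓ (1 - u²)^{c+1} e^{κu}]` over `[-1, 1]`
for `ℓ = 0, 1` gives the continued-fraction recurrence `r_c (2c + 3 + κ r_{c+1}) = κ`.
Pairing `u` with `-u` shows that `u` and `u²` are positively correlated, which is the
monotonicity `r_{c+1} ≤ r_c`. In the recurrence it yields `κ ≤ r_c (2c + 3 + κ r_c)`, whose positive
root is the lower bound; the lower bound for `r_{c+1}`, put back into the recurrence, is the upper
bound.
-/

open Set Real

lemma one_sub_sq_rpow_le_add (c : ℝ) {u : ℝ} (hu : u ∈ Icc (-1 : ℝ) 1) :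
    (1 - u ^ 2) ^ c ≤ (1 - u) ^ c + (1 + u) ^ c := by
  obtain ⟨hu₁, hu₂⟩ := hu
  have h₁ : 0 ≤ 1 - u := by linarith
  have h₂ : 0 ≤ 1 + u := by linarith
  rw [show 1 - u ^ 2 = (1 - u) * (1 + u) by ring, mul_rpow h₁ h₂]
  have hx := rpow_nonneg h₁ c
  have hy := rpow_nonneg h₂ c
  have hle_one : (1 - u) ^ c ≤ 1 ∨ (1 + u) ^ c ≤ 1 := by
    rcases le_total 0 u with hu | hu <;> rcases le_total 0 c with hc | hc
    · exact .inl (rpow_le_one h₁ (by linarith) hc)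
    · exact .inr (rpow_le_one_of_one_le_of_nonpos (by linarith) hc)
    · exact .inr (rpow_le_one h₂ (by linarith) hc)
    · exact .inl (rpow_le_one_of_one_le_of_nonpos (by linarith) hc)
  rcases hle_one with h | h <;> nlinarith

lemma intervalIntegrable_one_sub_sq_rpow {c : ℝ} (hc : -1 < c) :
    IntervalIntegrable (fun u : ℝ => (1 - u ^ 2) ^ c) volume (-1) 1 := by
  have hsub : IntervalIntegrable (fun u : ℝ => (1 - u) ^ c) volume (-1) 1 := by
    have := (intervalIntegrable_rpow' hc (a := 2) (b := 0)).comp_sub_left 1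
    norm_num at this
    exact this
  have hadd : IntervalIntegrable (fun u : ℝ => (1 + u) ^ c) volume (-1) 1 := by
    have := (intervalIntegrable_rpow' hc (a := 0) (b := 2)).comp_add_left 1
    norm_num at this
    exact this
  refine (hsub.add hadd).mono_fun' (by fun_prop : Measurable _).aestronglyMeasurable ?_
  rw [uIoc_of_le (by norm_num)]
  refine (ae_restrict_mem measurableSet_Ioc).mono fun u hu => ?_
  simp only [norm_of_nonneg (rpow_nonneg (by nlinarith [hu.1, hu.2] : 0 ≤ 1 - u ^ 2) c)]
  exact one_sub_sq_rpow_le_add c (Ioc_subset_Icc_self hu)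

noncomputable def weightedMoment (c κ : ℝ) (ℓ : ℕ) : ℝ :=
  ∫ u in (-1 : ℝ)..1, u ^ ℓ * (1 - u ^ 2) ^ c * exp (κ * u)

lemma intervalIntegrable_weightedMoment {c : ℝ} (hc : -1 < c) (κ : ℝ) (ℓ : ℕ) :
    IntervalIntegrable (fun u : ℝ => u ^ ℓ * (1 - u ^ 2) ^ c * exp (κ * u)) volume (-1) 1 :=
  ((intervalIntegrable_one_sub_sq_rpow hc).continuousOn_mul (by fun_prop)).mul_continuousOn
    (by fun_prop)

lemma weightedMoment_ibp {c : ℝ} (hc : -1 < c) (κ : ℝ) (ℓ : ℕ) :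
    ℓ * weightedMoment (c + 1) κ (ℓ - 1) + κ * weightedMoment (c + 1) κ ℓ =
      2 * (c + 1) * weightedMoment c κ (ℓ + 1) := by
  have hc₁ : 0 < c + 1 := by linarith
  set F : ℝ → ℝ := fun u => u ^ ℓ * (1 - u ^ 2) ^ (c + 1) * exp (κ * u)
  have hF : ContinuousOn F (Icc (-1) 1) := by
    have : Continuous fun x : ℝ => x ^ (c + 1) := continuous_rpow_const hc₁.le
    fun_prop
  have hderiv : ∀ u ∈ Ioo (-1 : ℝ) 1, HasDerivAt F
      (ℓ * (u ^ (ℓ - 1) * (1 - u ^ 2) ^ (c + 1) * exp (κ * u)) +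
        κ * (u ^ ℓ * (1 - u ^ 2) ^ (c + 1) * exp (κ * u)) -
          2 * (c + 1) * (u ^ (ℓ + 1) * (1 - u ^ 2) ^ c * exp (κ * u))) u := by
    intro u hu
    have hpos : 0 < 1 - u ^ 2 := by nlinarith [hu.1, hu.2]
    refine (((hasDerivAt_pow ℓ u).mul (((hasDerivAt_pow 2 u).const_sub 1).rpow_const
      (p := c + 1) (.inl hpos.ne'))).mul (((hasDerivAt_id u).const_mul κ).exp)).congr_deriv ?_
    simp only [id, Pi.mul_apply, add_sub_cancel_right, pow_succ]
    ring
  have hI := intervalIntegrable_weightedMoment hc κ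
  have hI₁ := intervalIntegrable_weightedMoment (c := c + 1) (by linarith) κ
  have hsum := ((hI₁ (ℓ - 1)).const_mul (ℓ : ℝ)).add ((hI₁ ℓ).const_mul κ)
  have hftc := integral_eq_sub_of_hasDerivAt_of_le (by norm_num) hF hderiv
    (hsum.sub ((hI (ℓ + 1)).const_mul _))
  have hF_one : F 1 = 0 := by simp [F, zero_rpow hc₁.ne']
  have hF_neg : F (-1) = 0 := by simp [F, zero_rpow hc₁.ne']
  rw [integral_sub hsum ((hI _).const_mul _), integral_add ((hI₁ _).const_mul _)
    ((hI₁ _).const_mul _), hF_one, hF_neg, sub_zero, sub_eq_zero] at hftc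
  simpa only [intervalIntegral.integral_const_mul, weightedMoment] using hftc

lemma weightedMoment_add_two {c : ℝ} (hc : -1 < c) (κ : ℝ) (ℓ : ℕ) :
    weightedMoment c κ (ℓ + 2) = weightedMoment c κ ℓ - weightedMoment (c + 1) κ ℓ := by
  rw [weightedMoment, weightedMoment, weightedMoment, ← integral_sub
    (intervalIntegrable_weightedMoment hc κ ℓ) (intervalIntegrable_weightedMoment (by linarith) κ ℓ)]
  refine integral_congr fun u hu => ?_
  rw [uIcc_of_le (by norm_num)] at hu
  have h : 0 ≤ 1 - u ^ 2 := by nlinarith [hu.1, hu.2]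
  simp only [rpow_add_one' h (by linarith : c + 1 ≠ 0)]
  ring

lemma weightedMoment_zero_pos {c : ℝ} (hc : -1 < c) (κ : ℝ) : 0 < weightedMoment c κ 0 := by
  refine intervalIntegral_pos_of_pos_on (intervalIntegrable_weightedMoment hc κ 0)
    (fun u hu => ?_) (by norm_num)
  have : 0 < 1 - u ^ 2 := by nlinarith [hu.1, hu.2]
  positivity

lemma weightedMoment_one_pos {c : ℝ} (hc : -1 < c) {κ : ℝ} (hκ : 0 < κ) :
    0 < weightedMoment c κ 1 := by
  have h := weightedMoment_ibp hc κ 0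
  rw [CharP.cast_eq_zero, zero_mul, zero_add] at h
  have := mul_pos hκ (weightedMoment_zero_pos (c := c + 1) (by linarith) κ)
  rw [h] at this
  exact pos_of_mul_pos_right this (by linarith)

lemma integral_nonneg_of_add_comp_neg_nonneg {f : ℝ → ℝ} {a : ℝ} (ha : 0 ≤ a)
    (hf : IntervalIntegrable f volume (-a) a) (h : ∀ u ∈ Icc (-a) a, 0 ≤ f u + f (-u)) :
    0 ≤ ∫ u in (-a)..a, f u := by
  have hf' : IntervalIntegrable (fun u => f (-u)) volume (-a) a := by
    simpa using ((IntervalIntegrable.iff_comp_neg).mp hf).symm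
  have hsymm : ∫ u in (-a)..a, f (-u) = ∫ u in (-a)..a, f u := by
    rw [integral_comp_neg, neg_neg]
  have := integral_nonneg (μ := volume) (by linarith) h
  rw [integral_add hf hf', hsymm] at this
  linarith

lemma mul_sinh_mul_cosh_le {κ d u : ℝ} (hκ : 0 ≤ κ) (hd : 0 ≤ d) (hdu : d ≤ u) :
    d * sinh (κ * d) * cosh (κ * u) ≤ u * sinh (κ * u) * cosh (κ * d) := by
  have hsinh : 0 ≤ sinh (κ * d) := sinh_nonneg_iff.mpr (by positivity)
  have hsub : sinh (κ * d - κ * u) ≤ 0 := sinh_nonpos_iff.mpr (by nlinarith)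
  rw [sinh_sub] at hsub
  calc d * sinh (κ * d) * cosh (κ * u) ≤ u * (sinh (κ * d) * cosh (κ * u)) := by
        rw [mul_assoc]; gcongr
    _ ≤ u * (sinh (κ * u) * cosh (κ * d)) := mul_le_mul_of_nonneg_left (by linarith) (by linarith)
    _ = u * sinh (κ * u) * cosh (κ * d) := by ring

lemma sq_sub_sq_mul_sinh_cosh_nonneg {κ d : ℝ} (hκ : 0 ≤ κ) (hd : 0 ≤ d) (u : ℝ) :
    0 ≤ (u ^ 2 - d ^ 2) * (u * sinh (κ * u) * cosh (κ * d) - d * sinh (κ * d) * cosh (κ * u)) := by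
  wlog hu : 0 ≤ u generalizing u
  · simpa [mul_neg, sinh_neg, cosh_neg] using this (-u) (by linarith)
  rcases le_total d u with hdu | hud
  · exact mul_nonneg (by nlinarith) (by linarith [mul_sinh_mul_cosh_le hκ hd hdu])
  · exact mul_nonneg_of_nonpos_of_nonpos (by nlinarith)
      (by linarith [mul_sinh_mul_cosh_le hκ hu hud])

lemma weightedMoment_one_mul_two_le {c : ℝ} (hc : -1 < c) {κ : ℝ} (hκ : 0 ≤ κ) :
    weightedMoment c κ 1 * weightedMoment c κ 2 ≤ weightedMoment c κ 0 * weightedMoment c κ 3 := by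
  set J := weightedMoment c κ
  have hJ₀ : 0 < J 0 := weightedMoment_zero_pos hc κ
  have hJ₂ : 0 ≤ J 2 := by
    refine integral_nonneg (by norm_num) fun u hu => ?_
    have : 0 ≤ 1 - u ^ 2 := by nlinarith [hu.1, hu.2]
    positivity
  set d := √(J 2 / J 0)
  have hd : 0 ≤ d := sqrt_nonneg _
  have hd₂ : d ^ 2 * J 0 = J 2 := by
    rw [sq_sqrt (div_nonneg hJ₂ hJ₀.le), div_mul_cancel₀ _ hJ₀.ne']
  have hI := intervalIntegrable_weightedMoment hc κ
  have hcomb : (fun u : ℝ => (u ^ 2 - d ^ 2) * (u * cosh (κ * d) - d * sinh (κ * d)) *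
      ((1 - u ^ 2) ^ c * exp (κ * u))) = fun u =>
      cosh (κ * d) * (u ^ 3 * (1 - u ^ 2) ^ c * exp (κ * u)) -
        d * sinh (κ * d) * (u ^ 2 * (1 - u ^ 2) ^ c * exp (κ * u)) -
        d ^ 2 * cosh (κ * d) * (u ^ 1 * (1 - u ^ 2) ^ c * exp (κ * u)) +
        d ^ 3 * sinh (κ * d) * (u ^ 0 * (1 - u ^ 2) ^ c * exp (κ * u)) := by
    funext u; ring
  have hint₃₂ := ((hI 3).const_mul (cosh (κ * d))).sub ((hI 2).const_mul (d * sinh (κ * d)))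
  have hint₃₂₁ := hint₃₂.sub ((hI 1).const_mul (d ^ 2 * cosh (κ * d)))
  have hint := hint₃₂₁.add ((hI 0).const_mul (d ^ 3 * sinh (κ * d)))
  have hexpand : (∫ u in (-1 : ℝ)..1,
      (u ^ 2 - d ^ 2) * (u * cosh (κ * d) - d * sinh (κ * d)) * ((1 - u ^ 2) ^ c * exp (κ * u))) =
      cosh (κ * d) * (J 3 - d ^ 2 * J 1) - d * sinh (κ * d) * (J 2 - d ^ 2 * J 0) := by
    rw [hcomb, integral_add hint₃₂₁ ((hI 0).const_mul _), integral_sub hint₃₂ ((hI 1).const_mul _),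
      integral_sub ((hI 3).const_mul _) ((hI 2).const_mul _)]
    simp only [intervalIntegral.integral_const_mul, J, weightedMoment]
    ring
  -- Chebyshev's argument: `u²` and `u tanh (κu)` both increase with `|u|`, so pairing `u` with `-u`
  -- makes the integrand nonnegative, and the pivot `d² = J₂ / J₀` kills the `sinh` term.
  have hnonneg : 0 ≤ ∫ u in (-1 : ℝ)..1,
      (u ^ 2 - d ^ 2) * (u * cosh (κ * d) - d * sinh (κ * d)) * ((1 - u ^ 2) ^ c * exp (κ * u)) := by
    refine integral_nonneg_of_add_comp_neg_nonneg zero_le_one (by rw [hcomb]; exact hint) fun u hu => ?_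
    have hw : 0 ≤ (1 - u ^ 2) ^ c := rpow_nonneg (by nlinarith [hu.1, hu.2]) c
    have key := mul_nonneg (mul_nonneg zero_le_two hw) (sq_sub_sq_mul_sinh_cosh_nonneg hκ hd u)
    refine key.trans_eq ?_
    rw [sinh_eq (κ * u), cosh_eq (κ * u), neg_sq, mul_neg]
    ring
  rw [hexpand, ← hd₂, sub_self, mul_zero, sub_zero] at hnonneg
  have h₃ : d ^ 2 * J 1 ≤ J 3 := sub_nonneg.mp (nonneg_of_mul_nonneg_right hnonneg (cosh_pos _))
  calc J 1 * J 2 = J 0 * (d ^ 2 * J 1) := by rw [← hd₂]; ring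
    _ ≤ J 0 * J 3 := by gcongr

noncomputable def weightedMean (c κ : ℝ) : ℝ := weightedMoment c κ 1 / weightedMoment c κ 0

lemma weightedMean_pos {c : ℝ} (hc : -1 < c) {κ : ℝ} (hκ : 0 < κ) : 0 < weightedMean c κ :=
  div_pos (weightedMoment_one_pos hc hκ) (weightedMoment_zero_pos hc κ)

lemma weightedMean_mul_add {c : ℝ} (hc : -1 < c) (κ : ℝ) :
    weightedMean c κ * (2 * c + 3 + κ * weightedMean (c + 1) κ) = κ := by
  have h₀ := weightedMoment_ibp hc κ 0
  have h₁ := weightedMoment_ibp hc κ 1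
  have hsplit := weightedMoment_add_two hc κ 0
  have ha := weightedMoment_zero_pos hc κ
  have ha' := weightedMoment_zero_pos (c := c + 1) (by linarith) κ
  simp only [CharP.cast_eq_zero, zero_mul, zero_add, Nat.cast_one, one_mul, tsub_self,
    one_add_one_eq_two] at h₀ h₁ hsplit
  unfold weightedMean
  field_simp
  linear_combination weightedMoment c κ 1 * h₁ + 2 * (c + 1) * weightedMoment c κ 1 * hsplit -
    weightedMoment c κ 0 * h₀

lemma weightedMean_add_one_le {c : ℝ} (hc : -1 < c) {κ : ℝ} (hκ : 0 ≤ κ) :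
    weightedMean (c + 1) κ ≤ weightedMean c κ := by
  have hcov := weightedMoment_one_mul_two_le hc hκ
  rw [weightedMoment_add_two hc κ 0, show 3 = 1 + 2 from rfl, weightedMoment_add_two hc κ 1] at hcov
  unfold weightedMean
  rw [div_le_div_iff₀ (weightedMoment_zero_pos (by linarith) κ) (weightedMoment_zero_pos hc κ)]
  linarith

lemma sqrt_sq_add_sq_sub_le_mul {a κ x : ℝ} (ha : 0 ≤ a) (hκ : 0 ≤ κ) (hx : 0 ≤ x)
    (h : κ ≤ x * (2 * a + κ * x)) : √(a ^ 2 + κ ^ 2) - a ≤ κ * x := by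
  rw [sub_le_iff_le_add, sqrt_le_left (add_nonneg (mul_nonneg hκ hx) ha)]
  nlinarith [mul_le_mul_of_nonneg_left h hκ]

lemma div_add_sqrt_sq_add_sq {a κ : ℝ} (hκ : κ ≠ 0) :
    κ / (a + √(a ^ 2 + κ ^ 2)) = (√(a ^ 2 + κ ^ 2) - a) / κ := by
  have hs : |a| < √(a ^ 2 + κ ^ 2) := by
    rw [← sqrt_sq_eq_abs]
    exact sqrt_lt_sqrt (sq_nonneg a) (lt_add_of_pos_right _ (by positivity))
  rw [div_eq_div_iff (by linarith [neg_abs_le a]) hκ]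
  nlinarith [sq_sqrt (by positivity : 0 ≤ a ^ 2 + κ ^ 2)]

lemma div_div_add_sqrt_div {p : ℝ} (hp : 0 < p) (κ x y : ℝ) :
    κ / p / (x / p + √((y / p) ^ 2 + (κ / p) ^ 2)) = κ / (x + √(y ^ 2 + κ ^ 2)) := by
  rw [div_pow, div_pow, ← add_div, sqrt_div' _ (by positivity), sqrt_sq hp.le, ← add_div,
    div_div_div_cancel_right₀ hp.ne']

lemma sqrt_sub_le_mul_weightedMean {c : ℝ} (hc : -1 < c) {κ : ℝ} (hκ : 0 < κ) :
    √((c + 3 / 2) ^ 2 + κ ^ 2) - (c + 3 / 2) ≤ κ * weightedMean c κ := by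
  have hr := weightedMean_pos hc hκ
  refine sqrt_sq_add_sq_sub_le_mul (by linarith) hκ.le hr.le ?_
  calc κ = weightedMean c κ * (2 * c + 3 + κ * weightedMean (c + 1) κ) :=
        (weightedMean_mul_add hc κ).symm
    _ ≤ weightedMean c κ * (2 * (c + 3 / 2) + κ * weightedMean c κ) := by
        gcongr
        · linarith
        · exact weightedMean_add_one_le hc hκ.le

lemma div_le_weightedMean {c : ℝ} (hc : -1 < c) {κ : ℝ} (hκ : 0 < κ) :
    κ / (c + 3 / 2 + √((c + 3 / 2) ^ 2 + κ ^ 2)) ≤ weightedMean c κ := by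
  rw [div_add_sqrt_sq_add_sq hκ.ne', div_le_iff₀' hκ]
  exact sqrt_sub_le_mul_weightedMean hc hκ

lemma weightedMean_le_div {c : ℝ} (hc : -1 < c) {κ : ℝ} (hκ : 0 < κ) :
    weightedMean c κ ≤ κ / (c + 1 / 2 + √((c + 5 / 2) ^ 2 + κ ^ 2)) := by
  have hnext := sqrt_sub_le_mul_weightedMean (c := c + 1) (by linarith) hκ
  rw [show c + 1 + 3 / 2 = c + 5 / 2 by ring] at hnext
  have hS : c + 5 / 2 ≤ √((c + 5 / 2) ^ 2 + κ ^ 2) :=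
    le_sqrt_of_sq_le (by nlinarith)
  rw [le_div_iff₀ (by linarith)]
  calc weightedMean c κ * (c + 1 / 2 + √((c + 5 / 2) ^ 2 + κ ^ 2))
      ≤ weightedMean c κ * (2 * c + 3 + κ * weightedMean (c + 1) κ) :=
        mul_le_mul_of_nonneg_left (by linarith) (weightedMean_pos hc hκ).le
    _ = κ := weightedMean_mul_add hc κ

theorem e1_bounds (p : ℕ) (hp : 2 ≤ p) (κ : ℝ) (hκ : 0 < κ) :
    (κ / p) / (1 / 2 + Real.sqrt (1 / 4 + (κ / p) ^ 2)) ≤ e1 p κ ∧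
      e1 p κ ≤
        (κ / p) / (1 / 2 - 1 / p + Real.sqrt ((1 / 2 + 1 / p) ^ 2 + (κ / p) ^ 2)) := by
  have hp' : (2 : ℝ) ≤ p := by exact_mod_cast hp
  have hp₀ : (0 : ℝ) < p := by linarith
  have hc : -1 < ((p : ℝ) - 3) / 2 := by linarith
  have hhalf : (1 : ℝ) / 2 = p / 2 / p := by field_simp
  rw [show e1 p κ = weightedMean (((p : ℝ) - 3) / 2) κ from rfl]
  constructor
  · calc κ / p / (1 / 2 + √(1 / 4 + (κ / p) ^ 2))
        = κ / p / (p / 2 / p + √((p / 2 / p) ^ 2 + (κ / p) ^ 2)) := by rw [← hhalf]; norm_num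
      _ = κ / (((p : ℝ) - 3) / 2 + 3 / 2 + √((((p : ℝ) - 3) / 2 + 3 / 2) ^ 2 + κ ^ 2)) := by
        rw [div_div_add_sqrt_div hp₀]; ring_nf
      _ ≤ weightedMean (((p : ℝ) - 3) / 2) κ := div_le_weightedMean hc hκ
  · calc weightedMean (((p : ℝ) - 3) / 2) κ
        ≤ κ / (((p : ℝ) - 3) / 2 + 1 / 2 + √((((p : ℝ) - 3) / 2 + 5 / 2) ^ 2 + κ ^ 2)) :=
          weightedMean_le_div hc hκ
      _ = κ / p / ((p / 2 - 1) / p + √(((p / 2 + 1) / p) ^ 2 + (κ / p) ^ 2)) := by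
        rw [div_div_add_sqrt_div hp₀]; ring_nf
      _ = κ / p / (1 / 2 - 1 / p + √((1 / 2 + 1 / p) ^ 2 + (κ / p) ^ 2)) := by
        rw [sub_div, add_div, ← hhalf]
end

section
/- Let p ≥ 3 be an integer, let θ be a unit vector in ℝ^p, and let μ be a probability measure on the unit sphere S^{p−1} ⊂ ℝ^p that is rotationally symmetric about θ. Then for every unit vector θ₀ ∈ ℝ^p, ∫_{S^{p−1}} (x'θ₀)⁴ dμ(x) = e₄ (θ'θ₀)⁴ + (6(e₂ − e₄)/(p−1)) (θ'θ₀)² (1 − (θ'θ₀)²) + (3 f₄/(p²−1)) (1 − (θ'θ₀)²)², where e₂ := ∫ (x'θ)² dμ(x), e₄ := ∫ (x'θ)⁴ dμ(x), and f₄ := ∫ (1 − (x'θ)²)² dμ(x). -/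
open Matrix MeasureTheory

/-!
Write `θ₀ = c θ + s η` with `c = θ'θ₀`, `s² = 1 - c²` and `η` a unit vector orthogonal to `θ`.
Since `p ≥ 3`, rotations fixing `θ` act transitively on the vectors of `θ^⊥` of a given length
(a product of two Householder reflections suffices), so `T = ∫ (x'θ)² (x'η)²` and
`Q = ∫ (x'η)⁴` do not depend on `η`, and the rotation sending `η` to `-η` cancels the odd terms
of the binomial expansion: `∫ (x'θ₀)⁴ = c⁴ e₄ + 6 c² s² T + s⁴ Q`.
For an orthonormal basis `u₁, …, u_{p-1}` of `θ^⊥` we have `1 - (x'θ)² = ∑ (x'uᵢ)²` on the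
sphere, so integrating `(x'θ)² ∑ (x'uᵢ)²` gives `(p - 1) T = e₂ - e₄`, and integrating
`(∑ (x'uᵢ)²)²` gives `3 f₄ = (p - 1) (3 Q + (p - 2) Q) = (p² - 1) Q`, because polarizing with
`uᵢ ± uⱼ` shows `3 ∫ (x'uᵢ)² (x'uⱼ)² = Q` for `i ≠ j`.
-/

namespace Matrix

variable {n : Type*} [Fintype n]

lemma dotProduct_self_inv_sqrt_smul {z : n → ℝ} (hz : z ≠ 0) :
    ((√(z ⬝ᵥ z))⁻¹ • z) ⬝ᵥ ((√(z ⬝ᵥ z))⁻¹ • z) = 1 := by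
  have hzz : 0 < z ⬝ᵥ z := dotProduct_self_star_pos_iff.mpr hz
  rw [smul_dotProduct, dotProduct_smul, smul_smul, smul_eq_mul, ← mul_inv,
    Real.mul_self_sqrt hzz.le, inv_mul_cancel₀ hzz.ne']

variable [DecidableEq n]

lemma transpose_mulVec_eq_of_mulVec_eq {O : Matrix n n ℝ} (hO : O ∈ orthogonalGroup n ℝ)
    {v w : n → ℝ} (h : O *ᵥ w = v) : Oᵀ *ᵥ v = w := by
  rw [← h, mulVec_mulVec, (mem_orthogonalGroup_iff' _ _).mp hO, one_mulVec]

noncomputable def householder (d : n → ℝ) : Matrix n n ℝ :=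
  1 - (2 / (d ⬝ᵥ d)) • vecMulVec d d

lemma householder_mulVec (d x : n → ℝ) :
    householder d *ᵥ x = x - (2 * (d ⬝ᵥ x) / (d ⬝ᵥ d)) • d := by
  rw [householder, sub_mulVec, one_mulVec, smul_mulVec, vecMulVec_mulVec, op_smul_eq_smul,
    smul_smul]
  ring_nf

lemma householder_mulVec_of_dotProduct_eq_zero {d x : n → ℝ} (h : d ⬝ᵥ x = 0) :
    householder d *ᵥ x = x := by
  simp [householder_mulVec, h]

lemma transpose_householder (d : n → ℝ) : (householder d)ᵀ = householder d := by
  simp [householder, transpose_sub, transpose_smul, transpose_vecMulVec]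

lemma householder_mul_self {d : n → ℝ} (hd : d ≠ 0) : householder d * householder d = 1 := by
  have hdd : d ⬝ᵥ d ≠ 0 := dotProduct_self_eq_zero.not.mpr hd
  refine mulVec_injective (funext fun x => funext fun i => ?_)
  simp only [← mulVec_mulVec, householder_mulVec, one_mulVec, dotProduct_sub, dotProduct_smul,
    smul_eq_mul, Pi.sub_apply, Pi.smul_apply]
  field_simp
  ring

lemma householder_mem_orthogonalGroup {d : n → ℝ} (hd : d ≠ 0) :
    householder d ∈ orthogonalGroup n ℝ := by
  rw [mem_orthogonalGroup_iff, transpose_householder, householder_mul_self hd]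

lemma det_householder {d : n → ℝ} (hd : d ≠ 0) : (householder d).det = -1 := by
  have hdd : d ⬝ᵥ d ≠ 0 := dotProduct_self_eq_zero.not.mpr hd
  rw [householder, sub_eq_add_neg, ← neg_smul, ← smul_vecMulVec, vecMulVec_eq (Fin 1),
    det_one_add_replicateCol_mul_replicateRow, dotProduct_smul, smul_eq_mul]
  field_simp
  ring

lemma householder_mul_householder_mem_specialOrthogonalGroup {d e : n → ℝ} (hd : d ≠ 0)
    (he : e ≠ 0) : householder d * householder e ∈ specialOrthogonalGroup n ℝ :=
  mem_specialOrthogonalGroup_iff.mpr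
    ⟨mul_mem (householder_mem_orthogonalGroup hd) (householder_mem_orthogonalGroup he), by
      rw [det_mul, det_householder hd, det_householder he]; norm_num⟩

lemma householder_sub_mulVec {v w : n → ℝ} (h : v ⬝ᵥ v = w ⬝ᵥ w) (hvw : v ≠ w) :
    householder (v - w) *ᵥ w = v := by
  have hd : (v - w) ⬝ᵥ (v - w) = -2 * ((v - w) ⬝ᵥ w) := by
    simp only [sub_dotProduct, dotProduct_sub, h, dotProduct_comm w v]; ring
  have hdw : (v - w) ⬝ᵥ w ≠ 0 := by
    intro h0
    rw [h0, mul_zero, dotProduct_self_eq_zero, sub_eq_zero] at hd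
    exact hvw hd
  rw [householder_mulVec, hd,
    show 2 * ((v - w) ⬝ᵥ w) / (-2 * ((v - w) ⬝ᵥ w)) = -1 by field_simp]
  simp

end Matrix

lemma Continuous.integrable_of_ae_mem_isCompact {X : Type*} [TopologicalSpace X] [T2Space X]
    [MeasurableSpace X] [OpensMeasurableSpace X] {μ : Measure X} [IsFiniteMeasureOnCompacts μ]
    {K : Set X} (hK : IsCompact K) (hμK : ∀ᵐ x ∂μ, x ∈ K) {f : X → ℝ} (hf : Continuous f) :
    Integrable f μ := by
  rw [← Measure.restrict_eq_self_of_ae_mem hμK]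
  exact hf.continuousOn.integrableOn_compact hK

section

variable {ι : Type*} [Fintype ι]

lemma exists_ne_zero_dotProduct_eq_zero_of_two_lt (hι : 2 < Fintype.card ι) (a b : ι → ℝ) :
    ∃ z ≠ 0, z ⬝ᵥ a = 0 ∧ z ⬝ᵥ b = 0 := by
  have hker : LinearMap.ker (mulVecLin (of ![a, b])) ≠ ⊥ :=
    LinearMap.ker_ne_bot_of_finrank_lt (by simpa using hι)
  obtain ⟨z, hz, hz0⟩ := Submodule.exists_mem_ne_zero_of_ne_bot hker
  have hz' : of ![a, b] *ᵥ z = 0 := hz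
  exact ⟨z, hz0, by simpa [dotProduct_comm] using congrFun hz' 0,
    by simpa [dotProduct_comm] using congrFun hz' 1⟩

lemma exists_specialOrthogonal_mulVec_eq [DecidableEq ι] (hι : 2 < Fintype.card ι) {θ v w : ι → ℝ}
    (hvw : v ⬝ᵥ v = w ⬝ᵥ w) (hvθ : v ⬝ᵥ θ = 0) (hwθ : w ⬝ᵥ θ = 0) :
    ∃ O ∈ specialOrthogonalGroup ι ℝ, O *ᵥ θ = θ ∧ O *ᵥ w = v := by
  rcases eq_or_ne v w with rfl | hne
  · exact ⟨1, one_mem _, one_mulVec θ, one_mulVec v⟩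
  obtain ⟨z, hz, hzθ, hzv⟩ := exists_ne_zero_dotProduct_eq_zero_of_two_lt hι θ v
  have hdθ : (v - w) ⬝ᵥ θ = 0 := by rw [sub_dotProduct, hvθ, hwθ, sub_zero]
  refine ⟨householder z * householder (v - w),
    householder_mul_householder_mem_specialOrthogonalGroup hz (sub_ne_zero.mpr hne), ?_, ?_⟩
  · rw [← mulVec_mulVec, householder_mulVec_of_dotProduct_eq_zero hdθ,
      householder_mulVec_of_dotProduct_eq_zero hzθ]
  · rw [← mulVec_mulVec, householder_sub_mulVec hvw hne,
      householder_mulVec_of_dotProduct_eq_zero hzv]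

lemma exists_orthogonal_unit_eq_smul_add_smul [Nontrivial ι] {θ θ₀ : ι → ℝ}
    (hθ : θ ⬝ᵥ θ = 1) (hθ₀ : θ₀ ⬝ᵥ θ₀ = 1) :
    ∃ η s, η ⬝ᵥ η = 1 ∧ η ⬝ᵥ θ = 0 ∧ s ^ 2 = 1 - (θ ⬝ᵥ θ₀) ^ 2 ∧
      θ₀ = (θ ⬝ᵥ θ₀) • θ + s • η := by
  set w := θ₀ - (θ ⬝ᵥ θ₀) • θ
  have hwθ : w ⬝ᵥ θ = 0 := by simp [w, sub_dotProduct, hθ, dotProduct_comm θ₀]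
  have hww : w ⬝ᵥ w = 1 - (θ ⬝ᵥ θ₀) ^ 2 := by
    simp only [w, sub_dotProduct, dotProduct_sub, smul_dotProduct, dotProduct_smul, hθ, hθ₀,
      dotProduct_comm θ₀ θ, smul_eq_mul]
    ring
  -- when `θ₀ = ± θ` we have `w = 0`, and any direction orthogonal to `θ` will do
  obtain ⟨z, hz, hzθ, hwz⟩ : ∃ z ≠ 0, z ⬝ᵥ θ = 0 ∧ w = √(w ⬝ᵥ w) • (√(z ⬝ᵥ z))⁻¹ • z := by
    rcases eq_or_ne w 0 with hw | hw
    · obtain ⟨z, hz, hzθ⟩ := exists_ne_zero_dotProduct_eq_zero θ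
      exact ⟨z, hz, hzθ, by simp [hw]⟩
    · refine ⟨w, hw, hwθ, ?_⟩
      rw [smul_smul, mul_inv_cancel₀ (by positivity [(dotProduct_self_star_pos_iff.mpr hw :
        0 < w ⬝ᵥ w)]), one_smul]
  refine ⟨(√(z ⬝ᵥ z))⁻¹ • z, √(w ⬝ᵥ w), dotProduct_self_inv_sqrt_smul hz,
    by rw [smul_dotProduct, hzθ, smul_zero],
    by rw [Real.sq_sqrt (x := w ⬝ᵥ w) (dotProduct_self_star_nonneg w), hww],
    by rw [← hwz, add_sub_cancel]⟩

lemma isCompact_dotProduct_self_eq_one : IsCompact {x : ι → ℝ | x ⬝ᵥ x = 1} := by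
  refine Metric.isCompact_of_isClosed_isBounded (isClosed_eq (by fun_prop) continuous_const) ?_
  refine (Metric.isBounded_closedBall (x := 0) (r := 1)).subset fun x hx => ?_
  rw [mem_closedBall_zero_iff, pi_norm_le_iff_of_nonneg zero_le_one]
  intro i
  have : x i * x i ≤ x ⬝ᵥ x := Finset.single_le_sum (f := fun j => x j * x j)
    (fun j _ => mul_self_nonneg _) (Finset.mem_univ i)
  rw [Real.norm_eq_abs, ← abs_one, ← sq_le_sq, sq, one_pow]
  exact this.trans_eq hx

lemma Continuous.integrable_of_ae_dotProduct_self_eq_one {μ : Measure (ι → ℝ)}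
    [IsFiniteMeasure μ] (hsphere : ∀ᵐ x ∂μ, x ⬝ᵥ x = 1) {f : (ι → ℝ) → ℝ} (hf : Continuous f) :
    Integrable f μ :=
  hf.integrable_of_ae_mem_isCompact isCompact_dotProduct_self_eq_one hsphere

lemma integral_pow_four_add_add_integral_pow_four_sub {μ : Measure (ι → ℝ)}
    [IsFiniteMeasure μ] (hsphere : ∀ᵐ x ∂μ, x ⬝ᵥ x = 1) (a b : ι → ℝ) (c s : ℝ) :
    ∫ x, (c * (x ⬝ᵥ a) + s * (x ⬝ᵥ b)) ^ 4 ∂μ + ∫ x, (c * (x ⬝ᵥ a) - s * (x ⬝ᵥ b)) ^ 4 ∂μ =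
      2 * c ^ 4 * ∫ x, (x ⬝ᵥ a) ^ 4 ∂μ +
        12 * c ^ 2 * s ^ 2 * ∫ x, (x ⬝ᵥ a) ^ 2 * (x ⬝ᵥ b) ^ 2 ∂μ +
        2 * s ^ 4 * ∫ x, (x ⬝ᵥ b) ^ 4 ∂μ := by
  have hint {f : (ι → ℝ) → ℝ} (hf : Continuous f) : Integrable f μ :=
    hf.integrable_of_ae_dotProduct_self_eq_one hsphere
  rw [← integral_add (hint (by fun_prop)) (hint (by fun_prop)), ← integral_const_mul,
    ← integral_const_mul, ← integral_const_mul,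
    ← integral_add (hint (by fun_prop)) (hint (by fun_prop)),
    ← integral_add (hint (by fun_prop)) (hint (by fun_prop))]
  congr 1 with x
  ring

end

lemma exists_orthonormal_complement {n : ℕ} {θ : Fin (n + 1) → ℝ} (hθ : θ ⬝ᵥ θ = 1) :
    ∃ b : Fin n → Fin (n + 1) → ℝ, (∀ i j, b i ⬝ᵥ b j = if i = j then 1 else 0) ∧
      (∀ i, b i ⬝ᵥ θ = 0) ∧ ∀ x, (x ⬝ᵥ θ) ^ 2 + ∑ i, (x ⬝ᵥ b i) ^ 2 = x ⬝ᵥ x := by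
  have hdot (x y : EuclideanSpace ℝ (Fin (n + 1))) : x.ofLp ⬝ᵥ y.ofLp = inner ℝ x y := by
    simp [EuclideanSpace.inner_eq_star_dotProduct, dotProduct_comm]
  have hθ' : Orthonormal ℝ (({0} : Set (Fin (n + 1))).domRestrict fun _ => WithLp.toLp 2 θ) := by
    refine orthonormal_subsingleton_iff.mpr fun _ => ?_
    rw [Set.domRestrict_apply, norm_eq_sqrt_real_inner, ← hdot, hθ, Real.sqrt_one]
  obtain ⟨b, hb⟩ := hθ'.exists_orthonormalBasis_extension_of_card_eq (by simp)
  have hb0 : (b 0).ofLp = θ := by rw [hb 0 rfl]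
  have hbb (i j) : (b i).ofLp ⬝ᵥ (b j).ofLp = if i = j then 1 else 0 := by
    rw [hdot, orthonormal_iff_ite.mp b.orthonormal]
  refine ⟨fun i => (b i.succ).ofLp, fun i j => by simp [hbb], fun i => ?_, fun x => ?_⟩
  · rw [← hb0, hbb, if_neg (Fin.succ_ne_zero i)]
  · have := b.sum_sq_inner_left (WithLp.toLp 2 x)
    rw [Fin.sum_univ_succ, ← real_inner_self_eq_norm_sq, ← hdot] at this
    simpa only [← hdot, WithLp.ofLp_toLp, hb0] using this

variable {p : ℕ}

def IsRotationallySymmetricAbout (μ : Measure (Fin p → ℝ)) (θ : Fin p → ℝ) : Prop :=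
  ∀ O ∈ specialOrthogonalGroup (Fin p) ℝ, O *ᵥ θ = θ → μ.map (O *ᵥ ·) = μ

namespace IsRotationallySymmetricAbout

variable {μ : Measure (Fin p → ℝ)} {θ : Fin p → ℝ}

lemma integral_comp_mulVec (hμ : IsRotationallySymmetricAbout μ θ)
    {O : Matrix (Fin p) (Fin p) ℝ} (hO : O ∈ specialOrthogonalGroup (Fin p) ℝ)
    (hOθ : O *ᵥ θ = θ) {f : (Fin p → ℝ) → ℝ} (hf : Measurable f) :
    ∫ x, f (O *ᵥ x) ∂μ = ∫ x, f x ∂μ := by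
  conv_rhs => rw [← hμ O hO hOθ]
  exact (integral_map (by fun_prop : Continuous (O *ᵥ ·)).aemeasurable
    hf.aestronglyMeasurable).symm

lemma integral_dotProduct_eq (hμ : IsRotationallySymmetricAbout μ θ) (hp : 3 ≤ p)
    {v w : Fin p → ℝ} (hvw : v ⬝ᵥ v = w ⬝ᵥ w) (hvθ : v ⬝ᵥ θ = 0) (hwθ : w ⬝ᵥ θ = 0)
    {g : ℝ → ℝ → ℝ} (hg : Measurable (Function.uncurry g)) :
    ∫ x, g (x ⬝ᵥ θ) (x ⬝ᵥ v) ∂μ = ∫ x, g (x ⬝ᵥ θ) (x ⬝ᵥ w) ∂μ := by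
  obtain ⟨O, hO, hOθ, hOw⟩ :=
    exists_specialOrthogonal_mulVec_eq (by rwa [Fintype.card_fin]) hvw hvθ hwθ
  have hdot (x u : Fin p → ℝ) : O *ᵥ x ⬝ᵥ u = x ⬝ᵥ (Oᵀ *ᵥ u) := by
    rw [dotProduct_comm, dotProduct_mulVec, ← mulVec_transpose, dotProduct_comm]
  have hf : Measurable fun x : Fin p → ℝ => g (x ⬝ᵥ θ) (x ⬝ᵥ v) :=
    hg.comp (f := fun x => (x ⬝ᵥ θ, x ⬝ᵥ v)) (by fun_prop)
  rw [← hμ.integral_comp_mulVec hO hOθ hf]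
  simp only [hdot, transpose_mulVec_eq_of_mulVec_eq hO.1 hOθ,
    transpose_mulVec_eq_of_mulVec_eq hO.1 hOw]

variable [IsFiniteMeasure μ] (hμ : IsRotationallySymmetricAbout μ θ) (hp : 3 ≤ p)
  (hsphere : ∀ᵐ x ∂μ, x ⬝ᵥ x = 1)
include hμ hp hsphere

lemma integral_pow_four_smul_add_smul {η : Fin p → ℝ} (hηθ : η ⬝ᵥ θ = 0) (c s : ℝ) :
    ∫ x, (x ⬝ᵥ (c • θ + s • η)) ^ 4 ∂μ =
      c ^ 4 * ∫ x, (x ⬝ᵥ θ) ^ 4 ∂μ +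
        6 * c ^ 2 * s ^ 2 * ∫ x, (x ⬝ᵥ θ) ^ 2 * (x ⬝ᵥ η) ^ 2 ∂μ +
        s ^ 4 * ∫ x, (x ⬝ᵥ η) ^ 4 ∂μ := by
  have hflip := hμ.integral_dotProduct_eq hp (neg_dotProduct_neg η η).symm hηθ
    (by rw [neg_dotProduct, hηθ, neg_zero]) (g := fun t y => (c * t + s * y) ^ 4) (by fun_prop)
  simp only [dotProduct_neg, mul_neg, ← sub_eq_add_neg] at hflip
  have := integral_pow_four_add_add_integral_pow_four_sub hsphere θ η c s
  simp only [dotProduct_add, dotProduct_smul, smul_eq_mul]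
  linarith

lemma three_mul_integral_sq_mul_sq {u v : Fin p → ℝ} (huv : u ⬝ᵥ v = 0)
    (hnorm : u ⬝ᵥ u = v ⬝ᵥ v) (huθ : u ⬝ᵥ θ = 0) (hvθ : v ⬝ᵥ θ = 0) :
    3 * ∫ x, (x ⬝ᵥ u) ^ 2 * (x ⬝ᵥ v) ^ 2 ∂μ = ∫ x, (x ⬝ᵥ u) ^ 4 ∂μ := by
  have hg : Measurable (Function.uncurry fun (_ y : ℝ) => y ^ 4) := by fun_prop
  have hdouble (w : Fin p → ℝ) (hw : w ⬝ᵥ w = 2 * (u ⬝ᵥ u)) (hwθ : w ⬝ᵥ θ = 0) :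
      ∫ x, (x ⬝ᵥ w) ^ 4 ∂μ = 4 * ∫ x, (x ⬝ᵥ u) ^ 4 ∂μ := by
    have h2 : (√2 • u) ⬝ᵥ (√2 • u) = w ⬝ᵥ w := by
      rw [hw, smul_dotProduct, dotProduct_smul, smul_smul, smul_eq_mul,
        Real.mul_self_sqrt zero_le_two]
    rw [← hμ.integral_dotProduct_eq hp h2 (by simp [huθ]) hwθ hg, ← integral_const_mul]
    congr 1 with x
    rw [dotProduct_smul, smul_eq_mul, mul_pow, show (4 : ℕ) = 2 * 2 from rfl, pow_mul,
      Real.sq_sqrt zero_le_two]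
    norm_num
  have hvu : v ⬝ᵥ u = 0 := by rw [dotProduct_comm, huv]
  have hadd := hdouble (u + v) (by simp [dotProduct_add, add_dotProduct, huv, hvu, hnorm]; ring)
    (by simp [add_dotProduct, huθ, hvθ])
  have hsub := hdouble (u - v) (by simp [dotProduct_sub, sub_dotProduct, huv, hvu, hnorm]; ring)
    (by simp [sub_dotProduct, huθ, hvθ])
  have hvv := hμ.integral_dotProduct_eq hp hnorm.symm hvθ huθ hg
  have := integral_pow_four_add_add_integral_pow_four_sub hsphere u v 1 1
  simp only [one_mul, one_pow, mul_one, ← dotProduct_add, ← dotProduct_sub, hadd, hsub,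
    hvv] at this
  linarith

variable (hθ : θ ⬝ᵥ θ = 1) {η : Fin p → ℝ} (hη : η ⬝ᵥ η = 1) (hηθ : η ⬝ᵥ θ = 0)
include hθ hη hηθ

lemma card_sub_one_mul_integral_sq_mul_sq :
    ((p : ℝ) - 1) * ∫ x, (x ⬝ᵥ θ) ^ 2 * (x ⬝ᵥ η) ^ 2 ∂μ =
      ∫ x, (x ⬝ᵥ θ) ^ 2 ∂μ - ∫ x, (x ⬝ᵥ θ) ^ 4 ∂μ := by
  have hint {f : (Fin p → ℝ) → ℝ} (hf : Continuous f) : Integrable f μ :=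
    hf.integrable_of_ae_dotProduct_self_eq_one hsphere
  obtain ⟨n, rfl⟩ : ∃ n, p = n + 1 := ⟨p - 1, by omega⟩
  obtain ⟨b, hbb, hbθ, hparseval⟩ := exists_orthonormal_complement hθ
  have hterm (i : Fin n) : ∫ x, (x ⬝ᵥ θ) ^ 2 * (x ⬝ᵥ b i) ^ 2 ∂μ =
      ∫ x, (x ⬝ᵥ θ) ^ 2 * (x ⬝ᵥ η) ^ 2 ∂μ :=
    hμ.integral_dotProduct_eq hp (by simp [hbb, hη]) (hbθ i) hηθ
      (g := fun t y => t ^ 2 * y ^ 2) (by fun_prop)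
  calc ((n + 1 : ℕ) - 1 : ℝ) * ∫ x, (x ⬝ᵥ θ) ^ 2 * (x ⬝ᵥ η) ^ 2 ∂μ
      = ∑ i, ∫ x, (x ⬝ᵥ θ) ^ 2 * (x ⬝ᵥ b i) ^ 2 ∂μ := by simp [hterm]
    _ = ∫ x, (x ⬝ᵥ θ) ^ 2 * (1 - (x ⬝ᵥ θ) ^ 2) ∂μ := by
      rw [← integral_finsetSum _ fun i _ => hint (by fun_prop)]
      refine integral_congr_ae (hsphere.mono fun x hx => ?_)
      simp only [← Finset.mul_sum, ← hx, ← hparseval x]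
      ring
    _ = _ := by
      rw [← integral_sub (hint (by fun_prop)) (hint (by fun_prop))]
      congr 1 with x
      ring

lemma card_sq_sub_one_mul_integral_pow_four :
    ((p : ℝ) ^ 2 - 1) * ∫ x, (x ⬝ᵥ η) ^ 4 ∂μ = 3 * ∫ x, (1 - (x ⬝ᵥ θ) ^ 2) ^ 2 ∂μ := by
  have hint {f : (Fin p → ℝ) → ℝ} (hf : Continuous f) : Integrable f μ :=
    hf.integrable_of_ae_dotProduct_self_eq_one hsphere
  obtain ⟨n, rfl⟩ : ∃ n, p = n + 1 := ⟨p - 1, by omega⟩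
  obtain ⟨b, hbb, hbθ, hparseval⟩ := exists_orthonormal_complement hθ
  set Q := ∫ x, (x ⬝ᵥ η) ^ 4 ∂μ
  have hpow (i : Fin n) : ∫ x, (x ⬝ᵥ b i) ^ 4 ∂μ = Q :=
    hμ.integral_dotProduct_eq hp (by simp [hbb, hη]) (hbθ i) hηθ
      (g := fun _ y => y ^ 4) (by fun_prop)
  have hterm (i j : Fin n) :
      3 * ∫ x, (x ⬝ᵥ b i) ^ 2 * (x ⬝ᵥ b j) ^ 2 ∂μ = Q + if j = i then 2 * Q else 0 := by
    split_ifs with hji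
    · rw [hji, ← hpow i]
      simp only [← pow_add]
      ring
    · rw [hμ.three_mul_integral_sq_mul_sq hp hsphere (by simp [hbb, Ne.symm hji])
        (by simp [hbb]) (hbθ i) (hbθ j), hpow]
      ring
  calc ((n + 1 : ℕ) ^ 2 - 1 : ℝ) * Q
      = ∑ i : Fin n, ∑ j : Fin n, (Q + if j = i then 2 * Q else 0) := by
        simp only [Finset.sum_add_distrib, Finset.sum_ite_eq', Finset.mem_univ, if_true,
          Finset.sum_const, Finset.card_univ, Fintype.card_fin, nsmul_eq_mul]
        push_cast
        ring
    _ = 3 * ∑ i, ∑ j, ∫ x, (x ⬝ᵥ b i) ^ 2 * (x ⬝ᵥ b j) ^ 2 ∂μ := by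
      simp only [Finset.mul_sum, hterm]
    _ = 3 * ∫ x, ∑ i, ∑ j, (x ⬝ᵥ b i) ^ 2 * (x ⬝ᵥ b j) ^ 2 ∂μ := by
      rw [integral_finsetSum _ fun i _ => hint (by fun_prop)]
      exact congrArg _ (Finset.sum_congr rfl fun i _ =>
        (integral_finsetSum _ fun j _ => hint (by fun_prop)).symm)
    _ = _ := by
      congr 1
      refine integral_congr_ae (hsphere.mono fun x hx => ?_)
      simp only [← Finset.sum_mul_sum, ← hx, ← hparseval x]
      ring

end IsRotationallySymmetricAbout

theorem fourth_moment_rotationally_symmetric (p : ℕ) (hp : 3 ≤ p)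
    (θ : Fin p → ℝ) (hθ : θ ⬝ᵥ θ = 1)
    (μ : Measure (Fin p → ℝ)) [IsProbabilityMeasure μ]
    (hsphere : ∀ᵐ x ∂μ, x ⬝ᵥ x = 1)
    (hrot : ∀ O : Matrix (Fin p) (Fin p) ℝ,
      O ∈ Matrix.orthogonalGroup (Fin p) ℝ → O.det = 1 → O.mulVec θ = θ →
        Measure.map (fun x => O.mulVec x) μ = μ)
    (θ₀ : Fin p → ℝ) (hθ₀ : θ₀ ⬝ᵥ θ₀ = 1) :
    ∫ x, (x ⬝ᵥ θ₀) ^ 4 ∂μ =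
      (∫ x, (x ⬝ᵥ θ) ^ 4 ∂μ) * (θ ⬝ᵥ θ₀) ^ 4 +
        (6 * ((∫ x, (x ⬝ᵥ θ) ^ 2 ∂μ) - ∫ x, (x ⬝ᵥ θ) ^ 4 ∂μ) / ((p : ℝ) - 1)) *
          (θ ⬝ᵥ θ₀) ^ 2 * (1 - (θ ⬝ᵥ θ₀) ^ 2) +
        (3 * (∫ x, (1 - (x ⬝ᵥ θ) ^ 2) ^ 2 ∂μ) / ((p : ℝ) ^ 2 - 1)) *
          (1 - (θ ⬝ᵥ θ₀) ^ 2) ^ 2 := by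
  have hμ : IsRotationallySymmetricAbout μ θ := fun O hO => hrot O hO.1 hO.2
  have : Nontrivial (Fin p) := Fin.nontrivial_iff_two_le.mpr (by omega)
  obtain ⟨η, s, hη, hηθ, hs, hθ₀η⟩ := exists_orthogonal_unit_eq_smul_add_smul hθ hθ₀
  have hp₃ : (3 : ℝ) ≤ p := by exact_mod_cast hp
  have hp₁ : (p : ℝ) - 1 ≠ 0 := ne_of_gt (by linarith)
  have hp₂ : (p : ℝ) ^ 2 - 1 ≠ 0 := ne_of_gt (by nlinarith)
  conv_lhs => rw [hθ₀η]
  rw [hμ.integral_pow_four_smul_add_smul hp hsphere hηθ,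
    ← hμ.card_sub_one_mul_integral_sq_mul_sq hp hsphere hθ hη hηθ,
    ← hμ.card_sq_sub_one_mul_integral_pow_four hp hsphere hθ hη hηθ, ← hs]
  field_simp
end
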